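/- Let σ > 0 and define θ(r) = (σ²/2 + √(σ⁴/4 + 2σ² r))/σ² for r > 0. Then (θ(r)-1)/r = (√2/σ) ∫₀^∞ e^{-s r} f(s; σ²/8) ds - ∫₀^∞ (1/2) e^{-r s} ds, where f(s;C) = (1/√(πs)) (e^{-C s} + √(π C s) erf(√(C s))). -/

import Mathlib

open Real MeasureTheory Set

/-- The Gauss error function. -/
noncomputable def erf (x : ℝ) : ℝ := (2 / Real.sqrt π) * ∫ t in (0:ℝ)..x, Real.exp (-t^2)

/-- The kernel `f(s; C)`. -/
noncomputable def fker (s C : ℝ) : ℝ :=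
  (1 / Real.sqrt (π * s)) * (Real.exp (-C * s) + Real.sqrt (π * C * s) * erf (Real.sqrt (C * s)))

/-- The positive root `θ(r)` of `(1/2)σ²θ² - (1/2)σ²θ - r = 0`. -/
noncomputable def θfun (σ r : ℝ) : ℝ :=
  (σ^2 / 2 + Real.sqrt (σ^4 / 4 + 2 * σ^2 * r)) / σ^2

/-! The integrand `e^{-s r} fker s C` has the explicit primitive
`(√(r + C) · erf √((r + C) s) - √C · e^{-r s} erf √(C s)) / r`, which vanishes at `0` and tends
to `√(r + C) / r` at infinity; so the Laplace transform of `fker · C` at `r` is `√(r + C) / r`.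
For `C = σ² / 8` this is `(θ(r) - 1/2) / r` up to the factor `σ / √2`, and the second integral
is `1 / (2 r)`. -/

open Filter Topology

theorem integral_exp_neg_sq_Ioi_zero : ∫ t in Ioi (0:ℝ), exp (-t ^ 2) = √π / 2 := by
  simpa using integral_gaussian_Ioi 1

theorem hasDerivAt_erf (x : ℝ) : HasDerivAt erf (2 / √π * exp (-x ^ 2)) x := by
  have hc : Continuous fun t : ℝ => exp (-t ^ 2) := by fun_prop
  exact (intervalIntegral.integral_hasDerivAt_right (hc.intervalIntegrable 0 x)
    (hc.stronglyMeasurableAtFilter volume _) hc.continuousAt).const_mul _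

@[fun_prop]
theorem continuous_erf : Continuous erf :=
  continuous_iff_continuousAt.2 fun x => (hasDerivAt_erf x).continuousAt

theorem erf_zero : erf 0 = 0 := by simp [erf]

theorem monotone_erf : Monotone erf :=
  monotone_of_deriv_nonneg (fun x => (hasDerivAt_erf x).differentiableAt) fun x => by
    rw [(hasDerivAt_erf x).deriv]; positivity

theorem erf_nonneg {x : ℝ} (hx : 0 ≤ x) : 0 ≤ erf x :=
  erf_zero ▸ monotone_erf hx

theorem tendsto_erf_atTop : Tendsto erf atTop (𝓝 1) := by
  have hgauss : IntegrableOn (fun t : ℝ => exp (-t ^ 2)) (Ioi 0) := by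
    simpa using (integrable_exp_neg_mul_sq one_pos).integrableOn
  have h := (intervalIntegral_tendsto_integral_Ioi 0 hgauss tendsto_id).const_mul
    (2 / √π)
  rwa [integral_exp_neg_sq_Ioi_zero, div_mul_div_cancel₀ (by positivity), div_self two_ne_zero]
    at h

theorem erf_le_one (x : ℝ) : erf x ≤ 1 :=
  monotone_erf.ge_of_tendsto tendsto_erf_atTop x

theorem hasDerivAt_erf_sqrt_mul {B s : ℝ} (hB : 0 < B) (hs : 0 < s) :
    HasDerivAt (fun u => erf √(B * u)) (√B * exp (-B * s) / √(π * s)) s := by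
  have hsqrt : HasDerivAt (fun u => √(B * u)) (B / (2 * √(B * s))) s := by
    simpa using ((hasDerivAt_id' s).const_mul B).sqrt (mul_pos hB hs).ne'
  refine ((hasDerivAt_erf _).comp s hsqrt).congr_deriv ?_
  rw [Real.sq_sqrt (mul_pos hB hs).le, Real.sqrt_mul hB.le, Real.sqrt_mul pi_pos.le]
  field_simp
  exact (Real.sq_sqrt hB.le).symm

theorem fker_eq {s C : ℝ} (hs : 0 < s) (hC : 0 ≤ C) :
    fker s C = exp (-C * s) / √(π * s) + √C * erf √(C * s) := by
  rw [fker, show π * C * s = C * (π * s) by ring, Real.sqrt_mul hC]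
  field_simp [(Real.sqrt_pos.2 (mul_pos pi_pos hs)).ne']

theorem fker_nonneg (s C : ℝ) : 0 ≤ fker s C := by
  have := erf_nonneg (Real.sqrt_nonneg (C * s))
  unfold fker
  positivity

noncomputable def fkerLaplacePrimitive (C r s : ℝ) : ℝ :=
  √(r + C) / r * erf √((r + C) * s) - √C / r * (exp (-r * s) * erf √(C * s))

theorem continuous_fkerLaplacePrimitive (C r : ℝ) : Continuous (fkerLaplacePrimitive C r) := by
  unfold fkerLaplacePrimitive
  fun_prop

theorem fkerLaplacePrimitive_zero (C r : ℝ) : fkerLaplacePrimitive C r 0 = 0 := by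
  simp [fkerLaplacePrimitive, erf_zero]

theorem hasDerivAt_fkerLaplacePrimitive {C r s : ℝ} (hC : 0 < C) (hr : 0 < r) (hs : 0 < s) :
    HasDerivAt (fkerLaplacePrimitive C r) (exp (-s * r) * fker s C) s := by
  have hexp : HasDerivAt (fun u => exp (-r * u)) (exp (-r * s) * -r) s := by
    simpa using ((hasDerivAt_id' s).const_mul (-r)).exp
  have h := ((hasDerivAt_erf_sqrt_mul (add_pos hr hC) hs).const_mul (√(r + C) / r)).sub
    ((hexp.mul (hasDerivAt_erf_sqrt_mul hC hs)).const_mul (√C / r))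
  refine h.congr_deriv ?_
  rw [fker_eq hs hC.le, show -(r + C) * s = -r * s + -C * s by ring, exp_add,
    show -s * r = -r * s by ring]
  have hB : √(r + C) ^ 2 = r + C := Real.sq_sqrt (add_pos hr hC).le
  have hC' : √C ^ 2 = C := Real.sq_sqrt hC.le
  have hP : √(π * s) ≠ 0 := (Real.sqrt_pos.2 (mul_pos pi_pos hs)).ne'
  -- opaque exponentials keep `field_simp` from renormalising their arguments
  generalize exp (-r * s) = E at *
  generalize exp (-C * s) = F at *
  field_simp
  linear_combination (E * F) * (hB - hC')

theorem tendsto_fkerLaplacePrimitive_atTop {C r : ℝ} (hC : 0 ≤ C) (hr : 0 < r) :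
    Tendsto (fkerLaplacePrimitive C r) atTop (𝓝 (√(r + C) / r)) := by
  have hsqrt : Tendsto (fun s => √((r + C) * s)) atTop atTop :=
    Real.tendsto_sqrt_atTop.comp (tendsto_id.const_mul_atTop (by positivity))
  have hexp : Tendsto (fun s => exp (-r * s)) atTop (𝓝 0) :=
    tendsto_exp_comp_nhds_zero.2 (tendsto_id.const_mul_atTop_of_neg (neg_lt_zero.2 hr))
  have herf_bdd : IsBoundedUnder (· ≤ ·) atTop (fun s => ‖erf √(C * s)‖) :=
    isBoundedUnder_of ⟨1, fun s => by
      rw [Real.norm_of_nonneg (erf_nonneg (Real.sqrt_nonneg _))]; exact erf_le_one _⟩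
  have h := ((tendsto_erf_atTop.comp hsqrt).const_mul (√(r + C) / r)).sub
    ((hexp.zero_mul_isBoundedUnder_le herf_bdd).const_mul (√C / r))
  rwa [mul_one, mul_zero, sub_zero] at h

theorem integral_exp_neg_mul_fker {C r : ℝ} (hC : 0 < C) (hr : 0 < r) :
    ∫ s in Ioi (0:ℝ), exp (-s * r) * fker s C = √(r + C) / r := by
  rw [integral_Ioi_of_hasDerivAt_of_nonneg
    (continuous_fkerLaplacePrimitive C r).continuousWithinAt
    (fun s hs => hasDerivAt_fkerLaplacePrimitive hC hr hs)
    (fun s _ => mul_nonneg (exp_pos _).le (fker_nonneg s C))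
    (tendsto_fkerLaplacePrimitive_atTop hC.le hr), fkerLaplacePrimitive_zero, sub_zero]

theorem integral_half_exp_neg_mul {r : ℝ} (hr : 0 < r) :
    ∫ s in Ioi (0:ℝ), (1/2 : ℝ) * exp (-r * s) = 1 / (2 * r) := by
  rw [integral_const_mul, integral_exp_mul_Ioi (neg_lt_zero.2 hr), mul_zero, exp_zero]
  field_simp

theorem θfun_sub_one {σ : ℝ} (hσ : 0 < σ) (r : ℝ) :
    θfun σ r - 1 = √2 / σ * √(r + σ ^ 2 / 8) - 1 / 2 := by
  have hsqrt : √(σ ^ 4 / 4 + 2 * σ ^ 2 * r) = σ * (√2 * √(r + σ ^ 2 / 8)) := by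
    rw [show σ ^ 4 / 4 + 2 * σ ^ 2 * r = σ ^ 2 * (2 * (r + σ ^ 2 / 8)) by ring,
      Real.sqrt_mul (sq_nonneg σ), Real.sqrt_sq hσ.le, Real.sqrt_mul zero_le_two]
  rw [θfun, hsqrt]
  field_simp
  ring

theorem stmt6 (σ : ℝ) (hσ : 0 < σ) (r : ℝ) (hr : 0 < r) :
    (θfun σ r - 1) / r =
      (Real.sqrt 2 / σ) * (∫ s in Ioi (0:ℝ), Real.exp (-s * r) * fker s (σ^2 / 8)) -
      ∫ s in Ioi (0:ℝ), (1/2 : ℝ) * Real.exp (-r * s) := by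
  rw [integral_exp_neg_mul_fker (by positivity) hr, integral_half_exp_neg_mul hr,
    θfun_sub_one hσ]
  field_simp
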